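/- arXiv:1202.4482 — 6 statements merged into one kernel-verified Lean document; each statement's English description precedes it below -/
import Mathlib

section
/- Effective information quantifies importance up to a metabolic discrepancy: for the Gibbs policy π* and any action a whose marginal π*(a) := ∑_s π*(a|s)·P_S(s) is positive, ei(π*,a) = ∑_s π*(s|a)·R̄(s,a) + log(P_A(a)/π*(a)), where π*(s|a) := π*(a|s)·P_S(s)/π*(a). -/
/-- Effective information quantifies importance up to a metabolic discrepancy:
for the Gibbs policy `gibbs` and any action `a` whose marginal
`marg = ∑ s, gibbs s a * P_S s` is positive,
`ei (gibbs, a) = ∑ s, post s * Rbar s a + log (P_A a / marg)`,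
where `post s = gibbs s a * P_S s / marg` is the posterior,
`Rbar s a = β * R s a - log (Z s)` is the relative reward, and
`ei (gibbs, a) = ∑ s, post s * log (post s / P_S s)` is effective information. -/
theorem effective_information_eq_importance_plus_metabolic_discrepancy
    {S A : Type*} [Fintype S] [Nonempty S] [Fintype A] [Nonempty A]
    (P_S : S → ℝ) (hPSpos : ∀ s, 0 < P_S s) (hPSsum : ∑ s, P_S s = 1)
    (P_A : A → ℝ) (hPApos : ∀ a, 0 < P_A a) (hPAsum : ∑ a, P_A a = 1)
    (R : S → A → ℝ) (β : ℝ) (hβ : 0 < β)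
    (Z : S → ℝ) (hZ : ∀ s, Z s = ∑ a, P_A a * Real.exp (β * R s a))
    (gibbs : S → A → ℝ)
    (hgibbs : ∀ s a, gibbs s a = P_A a * Real.exp (β * R s a) / Z s)
    (Rbar : S → A → ℝ) (hRbar : ∀ s a, Rbar s a = β * R s a - Real.log (Z s))
    (a : A)
    (marg : ℝ) (hmarg : marg = ∑ s, gibbs s a * P_S s) (hmargpos : 0 < marg)
    (post : S → ℝ) (hpost : ∀ s, post s = gibbs s a * P_S s / marg) :
    ∑ s, post s * Real.log (post s / P_S s)
      = (∑ s, post s * Rbar s a) + Real.log (P_A a / marg) := by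

  have hZpos : ∀ s, 0 < Z s := by
    intro s
    rw [hZ]
    exact Finset.sum_pos (fun a _ => mul_pos (hPApos a) (Real.exp_pos _)) Finset.univ_nonempty
  have hgpos : ∀ s, 0 < gibbs s a := fun s => by
    rw [hgibbs]; exact div_pos (mul_pos (hPApos a) (Real.exp_pos _)) (hZpos s)
  have hpostpos : ∀ s, 0 < post s := fun s => by
    rw [hpost]; exact div_pos (mul_pos (hgpos s) (hPSpos s)) hmargpos
  have hpostsum : ∑ s, post s = 1 := by
    simp only [hpost]
    rw [← Finset.sum_div, ← hmarg, div_self hmargpos.ne']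
  have key : ∀ s, Real.log (post s / P_S s) = Rbar s a + Real.log (P_A a / marg) := by
    intro s
    have h1 : post s / P_S s = P_A a * Real.exp (β * R s a) / Z s / marg := by
      rw [hpost, hgibbs]
      field_simp
      rw [mul_div_mul_right _ _ (hPSpos s).ne']
    rw [h1, hRbar, div_div,
        Real.log_div (mul_pos (hPApos a) (Real.exp_pos _)).ne' (mul_pos (hZpos s) hmargpos).ne',
        Real.log_mul (hPApos a).ne' (Real.exp_pos _).ne', Real.log_exp,
        Real.log_mul (hZpos s).ne' hmargpos.ne',
        Real.log_div (hPApos a).ne' hmargpos.ne']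
    ring
  calc ∑ s, post s * Real.log (post s / P_S s)
      = ∑ s, (post s * Rbar s a + post s * Real.log (P_A a / marg)) := by
        apply Finset.sum_congr rfl; intro s _; rw [key s]; ring
    _ = (∑ s, post s * Rbar s a) + (∑ s, post s) * Real.log (P_A a / marg) := by
        rw [Finset.sum_add_distrib, ← Finset.sum_mul]
    _ = (∑ s, post s * Rbar s a) + Real.log (P_A a / marg) := by rw [hpostsum, one_mul]
end

section
/- Under the strong metabolic constraint, effective information equals importance exactly: if the marginal of the Gibbs policy equals the metabolic prior, i.e. ∑_s π*(a|s)·P_S(s) = P_A(a) for every action a, then for every action a, ei(π*,a) = ∑_s π*(s|a)·R̄(s,a), the expected relative reward of a under the posterior. -/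
/-- Under the strong metabolic constraint (the marginal of the Gibbs policy equals the
metabolic prior, `marg a = P_A a` for every `a`), effective information equals
importance exactly: for every action `a`,
`ei (gibbs, a) = ∑ s, post a s * Rbar s a`, the expected relative reward of `a`
under the posterior `post a s = gibbs s a * P_S s / marg a`. -/
theorem effective_information_eq_importance_under_strong_metabolic_constraint
    {S A : Type*} [Fintype S] [Nonempty S] [Fintype A] [Nonempty A]
    (P_S : S → ℝ) (hPSpos : ∀ s, 0 < P_S s) (hPSsum : ∑ s, P_S s = 1)
    (P_A : A → ℝ) (hPApos : ∀ a, 0 < P_A a) (hPAsum : ∑ a, P_A a = 1)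
    (R : S → A → ℝ) (β : ℝ) (hβ : 0 < β)
    (Z : S → ℝ) (hZ : ∀ s, Z s = ∑ a, P_A a * Real.exp (β * R s a))
    (gibbs : S → A → ℝ)
    (hgibbs : ∀ s a, gibbs s a = P_A a * Real.exp (β * R s a) / Z s)
    (Rbar : S → A → ℝ) (hRbar : ∀ s a, Rbar s a = β * R s a - Real.log (Z s))
    (marg : A → ℝ) (hmarg : ∀ a, marg a = ∑ s, gibbs s a * P_S s)
    (hMP : ∀ a, marg a = P_A a)
    (post : A → S → ℝ) (hpost : ∀ a s, post a s = gibbs s a * P_S s / marg a) :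
    ∀ a, ∑ s, post a s * Real.log (post a s / P_S s) = ∑ s, post a s * Rbar s a := by
  intro a
  have hZpos : ∀ s, 0 < Z s := by
    intro s
    rw [hZ]
    exact Finset.sum_pos (fun b _ => mul_pos (hPApos b) (Real.exp_pos _))
      Finset.univ_nonempty
  apply Finset.sum_congr rfl
  intro s _
  congr 1
  have h1 : post a s / P_S s = Real.exp (β * R s a) / Z s := by
    rw [hpost, hgibbs, hMP, div_mul_eq_mul_div, div_div, div_div,
      div_eq_div_iff (mul_ne_zero (hZpos s).ne'
        (mul_ne_zero (hPApos a).ne' (hPSpos s).ne')) (hZpos s).ne']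
    ring
  rw [h1, Real.log_div (Real.exp_ne_zero _) (hZpos s).ne', Real.log_exp, hRbar]
end

section
/- In the deterministic regime with a strong metabolic constraint, effective information is a function of metabolic cost alone: if π is a deterministic policy (for every s exactly one action a has π(a|s) = 1) whose marginal equals the metabolic prior, i.e. ∑_s π(a|s)·P_S(s) = P_A(a) for every action a, then ei(π,a) = −log P_A(a) for every action a. -/
/-- In the deterministic regime with a strong metabolic constraint, effective
information is a function of metabolic cost alone: if `pol` is a deterministic policy
(for every `s` exactly one action has probability 1) whose marginal equals the
metabolic prior, `∑ s, pol s a * P_S s = P_A a` for every `a`, then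
`ei (pol, a) = -log (P_A a)` for every action `a`. -/
theorem effective_information_eq_neg_log_metabolic_prior
    {S A : Type*} [Fintype S] [Nonempty S] [Fintype A] [Nonempty A]
    (P_S : S → ℝ) (hPSpos : ∀ s, 0 < P_S s) (hPSsum : ∑ s, P_S s = 1)
    (P_A : A → ℝ) (hPApos : ∀ a, 0 < P_A a) (hPAsum : ∑ a, P_A a = 1)
    (pol : S → A → ℝ) (hpolnn : ∀ s a, 0 ≤ pol s a) (hpolsum : ∀ s, ∑ a, pol s a = 1)
    (hdet : ∀ s, ∃ a, pol s a = 1 ∧ ∀ a', a' ≠ a → pol s a' = 0)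
    (marg : A → ℝ) (hmarg : ∀ a, marg a = ∑ s, pol s a * P_S s)
    (hMP : ∀ a, marg a = P_A a)
    (post : A → S → ℝ) (hpost : ∀ a s, post a s = pol s a * P_S s / marg a) :
    ∀ a, ∑ s, post a s * Real.log (post a s / P_S s) = -Real.log (P_A a) := by
  intro a
  have hm : marg a = P_A a := hMP a
  have hterm : ∀ s, post a s * Real.log (post a s / P_S s)
      = pol s a * P_S s * (-(Real.log (P_A a)) / P_A a) := by
    intro s
    obtain ⟨a', h1, h0⟩ := hdet s
    by_cases h : a = a'
    · subst h
      rw [hpost, hm, h1]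
      have hPA := hPApos a
      have hPS := hPSpos s
      rw [one_mul]
      have : P_S s / P_A a / P_S s = (P_A a)⁻¹ := by
        field_simp
      rw [this, Real.log_inv]
      ring
    · rw [hpost, h0 a h, zero_mul, zero_div, zero_mul, zero_mul]
  rw [Finset.sum_congr rfl fun s _ => hterm s, ← Finset.sum_mul, ← hmarg, hm]
  have hne := (hPApos a).ne'
  field_simp
end

section
/- Under the strong metabolic constraint, the total expected relative reward equals the mutual information of the Gibbs policy: if ∑_s π*(a|s)·P_S(s) = P_A(a) for every action a, then ∑_s P_S(s)·∑_a π*(a|s)·R̄(s,a) = I_{π*}, where I_{π*} := ∑_{s} ∑_{a : π*(a|s) > 0} P_S(s)·π*(a|s)·log(π*(a|s)/π*(a)) is the mutual information between situations and actions and π*(a) := ∑_s π*(a|s)·P_S(s). -/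
open scoped Classical

/-! Since `π*(a|s) = P_A(a) · exp (β R(s,a)) / Z(s)` is strictly positive, the metabolic constraint
`π*(a) = P_A(a)` turns each term `log (π*(a|s) / π*(a))` of the mutual information into
`log (exp (β R(s,a)) / Z(s)) = R̄(s,a)`, so the two double sums agree term by term. -/

theorem sum_mul_exp_pos {A : Type*} [Fintype A] [Nonempty A] {p : A → ℝ} (hp : ∀ a, 0 < p a)
    (E : A → ℝ) : 0 < ∑ a, p a * Real.exp (E a) :=
  Finset.sum_pos (fun a _ => mul_pos (hp a) (Real.exp_pos _)) Finset.univ_nonempty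

theorem log_mul_exp_div_div_self {p x Z : ℝ} (hp : p ≠ 0) (hZ : 0 < Z) :
    Real.log (p * Real.exp x / Z / p) = x - Real.log Z := by
  rw [div_right_comm, mul_div_cancel_left₀ _ hp,
    Real.log_div (Real.exp_pos x).ne' hZ.ne', Real.log_exp]

theorem total_relative_reward_eq_mutual_information_general
    {S A : Type*} [Fintype S] [Fintype A]
    (P_S : S → ℝ)
    (P_A : A → ℝ) (hPApos : ∀ a, 0 < P_A a)
    (R : S → A → ℝ) (β : ℝ)
    (Z : S → ℝ) (hZ : ∀ s, Z s = ∑ a, P_A a * Real.exp (β * R s a))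
    (gibbs : S → A → ℝ)
    (hgibbs : ∀ s a, gibbs s a = P_A a * Real.exp (β * R s a) / Z s)
    (Rbar : S → A → ℝ) (hRbar : ∀ s a, Rbar s a = β * R s a - Real.log (Z s))
    (marg : A → ℝ)
    (hMP : ∀ a, marg a = P_A a) :
    ∑ s, P_S s * ∑ a, gibbs s a * Rbar s a
      = ∑ s, ∑ a ∈ Finset.univ.filter (fun a => 0 < gibbs s a),
          P_S s * gibbs s a * Real.log (gibbs s a / marg a) := by
  refine Finset.sum_congr rfl fun s _ => ?_
  rw [Finset.mul_sum, Finset.sum_filter]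
  refine Finset.sum_congr rfl fun a _ => ?_
  have : Nonempty A := ⟨a⟩
  have hZpos : 0 < Z s := hZ s ▸ sum_mul_exp_pos hPApos _
  have hgibbs_pos : 0 < gibbs s a := by
    rw [hgibbs]
    exact div_pos (mul_pos (hPApos a) (Real.exp_pos _)) hZpos
  have hlog : Real.log (gibbs s a / marg a) = Rbar s a := by
    rw [hMP, hgibbs, hRbar, log_mul_exp_div_div_self (hPApos a).ne' hZpos]
  rw [if_pos hgibbs_pos, hlog]
  ring

/-- Under the strong metabolic constraint, the total expected relative reward equals
the mutual information of the Gibbs policy: if `∑ s, gibbs s a * P_S s = P_A a` for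
every action `a`, then
`∑ s, P_S s * ∑ a, gibbs s a * Rbar s a
  = ∑ s, ∑_{a : gibbs s a > 0} P_S s * gibbs s a * log (gibbs s a / marg a)`. -/
theorem total_relative_reward_eq_mutual_information
    {S A : Type*} [Fintype S] [Nonempty S] [Fintype A] [Nonempty A]
    (P_S : S → ℝ) (hPSpos : ∀ s, 0 < P_S s) (hPSsum : ∑ s, P_S s = 1)
    (P_A : A → ℝ) (hPApos : ∀ a, 0 < P_A a) (hPAsum : ∑ a, P_A a = 1)
    (R : S → A → ℝ) (β : ℝ) (hβ : 0 < β)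
    (Z : S → ℝ) (hZ : ∀ s, Z s = ∑ a, P_A a * Real.exp (β * R s a))
    (gibbs : S → A → ℝ)
    (hgibbs : ∀ s a, gibbs s a = P_A a * Real.exp (β * R s a) / Z s)
    (Rbar : S → A → ℝ) (hRbar : ∀ s a, Rbar s a = β * R s a - Real.log (Z s))
    (marg : A → ℝ) (hmarg : ∀ a, marg a = ∑ s, gibbs s a * P_S s)
    (hMP : ∀ a, marg a = P_A a) :
    ∑ s, P_S s * ∑ a, gibbs s a * Rbar s a
      = ∑ s, ∑ a ∈ Finset.univ.filter (fun a => 0 < gibbs s a),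
          P_S s * gibbs s a * Real.log (gibbs s a / marg a) :=
  total_relative_reward_eq_mutual_information_general P_S P_A hPApos R β Z hZ gibbs hgibbs Rbar
    hRbar marg hMP
end

section
/- For a two-action agent that spikes rarely, mutual information is the spike probability times the effective information of a spike, up to second order: with the policy family π_p as in the context, the mutual information I_{π_p} := ∑_{s} ∑_{a ∈ {a0,a1} : π_p(a|s) > 0} P_S(s)·π_p(a|s)·log(π_p(a|s)/π_p(a)) satisfies lim_{p → 0⁺} (I_{π_p} − p·D[q‖P_S]) / p² = (1/2)·∑_s (P_S(s) − q(s))²/P_S(s), where D[q‖P_S] := ∑_{s : q(s) > 0} q(s)·log(q(s)/P_S(s)); in particular I_{π_p} = p·ei(π_p, a1) + O(p²) as p → 0⁺, since the posterior π_p(s|a1) equals q(s) and hence ei(π_p, a1) = D[q‖P_S]. -/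
/-!
The spike term of the mutual information is exactly `p · D[q ‖ P_S]`, because the posterior of a
spike is `q`. The silence term is a Jensen gap for `klFun x = x log x + 1 - x`: for weights `w`
and mean `m = ∑ w x`, `∑ w x log (x / m) = ∑ w klFun x - klFun m`. Hence
`I p - p D = ∑ P_S s klFun (1 - (q s / P_S s) p) - klFun (1 - p)`, and since
`klFun (1 + x) ~ x² / 2` (l'Hôpital), dividing by `p²` leaves `∑ q² / (2 P_S) - 1/2`, which is
half the χ²-divergence `∑ (P_S - q)² / P_S`.
-/

open scoped Classical
open Asymptotics Filter Real InformationTheory Topology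

lemma tendsto_log_one_add_div_self : Tendsto (fun x => log (1 + x) / x) (𝓝[≠] 0) (𝓝 1) := by
  have h := (hasDerivAt_log one_ne_zero).tendsto_slope_zero
  simp only [log_one, sub_zero, inv_one, smul_eq_mul] at h
  exact h.congr fun x => inv_mul_eq_div _ _

lemma tendsto_klFun_one_add_div_sq :
    Tendsto (fun x => klFun (1 + x) / x ^ 2) (𝓝[≠] 0) (𝓝 (1 / 2)) := by
  refine HasDerivAt.lhopital_zero_nhdsNE (f' := fun x => log (1 + x)) (g' := fun x => 2 * x)
    ?_ ?_ ?_ ?_ ?_ ?_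
  · filter_upwards [eventually_nhdsWithin_of_eventually_nhds
      (eventually_ne_nhds (show (0 : ℝ) ≠ -1 by norm_num))] with x hx
    exact (hasDerivAt_klFun (by contrapose! hx; linarith)).comp_const_add 1 x
  · exact Eventually.of_forall fun x => by simpa using hasDerivAt_pow 2 x
  · filter_upwards [self_mem_nhdsWithin] with x hx
    simpa using hx
  · have hcont : Continuous fun x => klFun (1 + x) :=
      continuous_klFun.comp (continuous_const_add 1)
    exact (hcont.tendsto' 0 0 (by simp [klFun_one])).mono_left nhdsWithin_le_nhds
  · exact ((continuous_pow 2).tendsto' 0 0 (by simp)).mono_left nhdsWithin_le_nhds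
  · simpa [div_mul_eq_div_div_swap] using tendsto_log_one_add_div_self.div_const 2

lemma tendsto_klFun_one_sub_mul_div_sq (c : ℝ) :
    Tendsto (fun x => klFun (1 - c * x) / x ^ 2) (𝓝[≠] 0) (𝓝 (c ^ 2 / 2)) := by
  rcases eq_or_ne c 0 with rfl | hc
  · simp [klFun_one]
  have hmap : Tendsto (fun x => -c * x) (𝓝[≠] 0) (𝓝[≠] 0) :=
    tendsto_nhdsWithin_of_tendsto_nhds_of_eventually_within _
      (((continuous_const_mul _).tendsto' 0 0 (by simp)).mono_left nhdsWithin_le_nhds)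
      (by filter_upwards [self_mem_nhdsWithin] with x hx; simpa [hc] using hx)
  have hlim : Tendsto (fun x => c ^ 2 * (klFun (1 - c * x) / (c * x) ^ 2)) (𝓝[≠] 0)
      (𝓝 (c ^ 2 / 2)) := by
    simpa [← sub_eq_add_neg, div_eq_mul_inv] using
      (tendsto_klFun_one_add_div_sq.comp hmap).const_mul (c ^ 2)
  refine hlim.congr' ?_
  filter_upwards [self_mem_nhdsWithin] with x hx
  have hx : x ≠ 0 := hx
  field_simp

lemma sum_mul_mul_log_div_eq_sum_mul_klFun_sub_klFun {ι : Type*} (s : Finset ι) (w x : ι → ℝ)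
    (hw : ∑ i ∈ s, w i = 1) (hm : ∑ i ∈ s, w i * x i ≠ 0) :
    ∑ i ∈ s, w i * x i * log (x i / ∑ j ∈ s, w j * x j)
      = ∑ i ∈ s, w i * klFun (x i) - klFun (∑ i ∈ s, w i * x i) := by
  set m := ∑ i ∈ s, w i * x i
  have hterm : ∀ i ∈ s,
      w i * x i * log (x i / m) = w i * (x i * log (x i)) - w i * x i * log m := by
    intro i _
    rcases eq_or_ne (x i) 0 with hx | hx
    · simp [hx]
    · rw [log_div hx hm]; ring
  have hK : ∑ i ∈ s, w i * klFun (x i) = ∑ i ∈ s, w i * (x i * log (x i)) + 1 - m := by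
    simp only [klFun_apply, mul_sub, mul_add, mul_one, Finset.sum_sub_distrib,
      Finset.sum_add_distrib, hw, m]
  rw [Finset.sum_congr rfl hterm, Finset.sum_sub_distrib, ← Finset.sum_mul, hK, klFun_apply]
  ring

section RareSpikes

variable {S : Type*} [Fintype S] {P_S q : S → ℝ} {pol : ℝ → Bool → S → ℝ}
  {marg : ℝ → Bool → ℝ}

lemma marg_true_eq (hPSpos : ∀ s, 0 < P_S s) (hqsum : ∑ s, q s = 1)
    (hpol1 : ∀ p s, pol p true s = p * q s / P_S s)
    (hmarg : ∀ p a, marg p a = ∑ s, pol p a s * P_S s) (p : ℝ) :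
    marg p true = p := by
  simp only [hmarg, hpol1, div_mul_cancel₀ _ (hPSpos _).ne', ← Finset.mul_sum, hqsum, mul_one]

lemma marg_false_eq (hPSpos : ∀ s, 0 < P_S s) (hPSsum : ∑ s, P_S s = 1) (hqsum : ∑ s, q s = 1)
    (hpol0 : ∀ p s, pol p false s = 1 - p * q s / P_S s)
    (hmarg : ∀ p a, marg p a = ∑ s, pol p a s * P_S s) (p : ℝ) :
    marg p false = 1 - p := by
  simp only [hmarg, hpol0, sub_mul, one_mul, div_mul_cancel₀ _ (hPSpos _).ne',
    Finset.sum_sub_distrib, ← Finset.mul_sum, hPSsum, hqsum, mul_one]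

lemma mutualInformation_sub_mul_klDiv_eq [Nonempty S] (hPSpos : ∀ s, 0 < P_S s)
    (hPSsum : ∑ s, P_S s = 1) (hqnn : ∀ s, 0 ≤ q s) (hqsum : ∑ s, q s = 1)
    (hpol1 : ∀ p s, pol p true s = p * q s / P_S s)
    (hpol0 : ∀ p s, pol p false s = 1 - p * q s / P_S s)
    (hmarg : ∀ p a, marg p a = ∑ s, pol p a s * P_S s)
    {p : ℝ} (hp : 0 < p) (hsmall : ∀ s, p * q s / P_S s < 1) :
    ∑ s, ∑ a ∈ Finset.univ.filter (fun a : Bool => 0 < pol p a s),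
        P_S s * pol p a s * log (pol p a s / marg p a)
      - p * ∑ s ∈ Finset.univ.filter (fun s => 0 < q s), q s * log (q s / P_S s)
      = ∑ s, P_S s * klFun (1 - q s / P_S s * p) - klFun (1 - p) := by
  have hpol_pos_false : ∀ s, 0 < pol p false s := fun s => by rw [hpol0]; linarith [hsmall s]
  have hpol_nonneg : ∀ a s, 0 ≤ pol p a s := by
    rintro (_ | _) s
    · exact (hpol_pos_false s).le
    · rw [hpol1]; have := hPSpos s; have := hqnn s; positivity
  have hmarg' : ∀ a, marg p a = ∑ s, P_S s * pol p a s := fun a => by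
    simp only [hmarg, mul_comm]
  have hspike : ∀ s, P_S s * pol p true s * log (pol p true s / marg p true)
      = p * (q s * log (q s / P_S s)) := fun s => by
    have := (hPSpos s).ne'
    rw [hpol1, marg_true_eq hPSpos hqsum hpol1 hmarg]
    field_simp
  have hsilence : ∑ s, P_S s * pol p false s * log (pol p false s / marg p false)
      = ∑ s, P_S s * klFun (1 - q s / P_S s * p) - klFun (1 - p) := by
    have hm : ∑ s, P_S s * pol p false s ≠ 0 :=
      (Finset.sum_pos (fun s _ => mul_pos (hPSpos s) (hpol_pos_false s)) Finset.univ_nonempty).ne'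
    rw [hmarg', sum_mul_mul_log_div_eq_sum_mul_klFun_sub_klFun _ _ _ hPSsum hm, ← hmarg',
      marg_false_eq hPSpos hPSsum hqsum hpol0 hmarg]
    simp only [hpol0, div_mul_eq_mul_div, mul_comm p]
  have hdrop_filter : ∀ s, ∑ a ∈ Finset.univ.filter (fun a : Bool => 0 < pol p a s),
      P_S s * pol p a s * log (pol p a s / marg p a)
        = ∑ a, P_S s * pol p a s * log (pol p a s / marg p a) := fun s =>
    Finset.sum_filter_of_ne fun a _ h =>
      (hpol_nonneg a s).lt_of_ne' (right_ne_zero_of_mul (left_ne_zero_of_mul h))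
  have hdrop_filter_D : ∑ s ∈ Finset.univ.filter (fun s => 0 < q s), q s * log (q s / P_S s)
      = ∑ s, q s * log (q s / P_S s) :=
    Finset.sum_filter_of_ne fun s _ h => (hqnn s).lt_of_ne' (left_ne_zero_of_mul h)
  rw [Finset.sum_congr rfl fun s _ => hdrop_filter s, Finset.sum_comm, Fintype.sum_bool,
    Finset.sum_congr rfl fun s _ => hspike s, hsilence, hdrop_filter_D, ← Finset.mul_sum]
  ring

lemma sum_sq_sub_div_eq_sum_sq_div_sub_one (hPSpos : ∀ s, 0 < P_S s) (hPSsum : ∑ s, P_S s = 1)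
    (hqsum : ∑ s, q s = 1) :
    ∑ s, (P_S s - q s) ^ 2 / P_S s = ∑ s, q s ^ 2 / P_S s - 1 := by
  have hexpand : ∀ s, (P_S s - q s) ^ 2 / P_S s = P_S s - 2 * q s + q s ^ 2 / P_S s := fun s => by
    have := (hPSpos s).ne'
    field_simp
    ring
  simp only [hexpand, Finset.sum_add_distrib, Finset.sum_sub_distrib, ← Finset.mul_sum, hPSsum,
    hqsum]
  ring

lemma tendsto_sum_mul_klFun_sub_klFun_div_sq (hPSpos : ∀ s, 0 < P_S s)
    (hPSsum : ∑ s, P_S s = 1) (hqsum : ∑ s, q s = 1) :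
    Tendsto (fun x => (∑ s, P_S s * klFun (1 - q s / P_S s * x) - klFun (1 - x)) / x ^ 2)
      (𝓝[≠] 0) (𝓝 ((1 / 2) * ∑ s, (P_S s - q s) ^ 2 / P_S s)) := by
  have hsum := tendsto_finsetSum Finset.univ fun s _ =>
    (tendsto_klFun_one_sub_mul_div_sq (q s / P_S s)).const_mul (P_S s)
  have hone : Tendsto (fun x => klFun (1 - x) / x ^ 2) (𝓝[≠] 0) (𝓝 (1 / 2)) := by
    simpa using tendsto_klFun_one_sub_mul_div_sq 1
  have hvalue : ∑ s, P_S s * ((q s / P_S s) ^ 2 / 2) - 1 / 2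
      = (1 / 2) * ∑ s, (P_S s - q s) ^ 2 / P_S s := by
    rw [sum_sq_sub_div_eq_sum_sq_div_sub_one hPSpos hPSsum hqsum, mul_sub, mul_one,
      Finset.mul_sum]
    congr 1
    refine Finset.sum_congr rfl fun s _ => ?_
    have := (hPSpos s).ne'
    field_simp
  rw [← hvalue]
  refine (hsum.sub hone).congr fun x => ?_
  simp only [sub_div, Finset.sum_div, mul_div_assoc]

end RareSpikes

/-- For a two-action agent (actions encoded as `Bool`, with `false` = silence `a0` and
`true` = spike `a1`) that spikes rarely, mutual information is the spike probability
times the effective information of a spike, up to second order.  With the policy family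
`pol p true s = p * q s / P_S s`, `pol p false s = 1 - p * q s / P_S s`, marginal
`marg p a = ∑ s, pol p a s * P_S s` (so `marg p true = p`), mutual information
`I p = ∑ s, ∑_{a : pol p a s > 0} P_S s * pol p a s * log (pol p a s / marg p a)`
and `D = D[q ‖ P_S] = ∑_{s : q s > 0} q s * log (q s / P_S s)`, we have
`lim_{p → 0⁺} (I p - p * D) / p² = (1/2) * ∑ s, (P_S s - q s)² / P_S s`;
in particular `I p = p * ei (pol p, a1) + O (p²)` as `p → 0⁺`, since the posterior
`pol p true s * P_S s / marg p true` equals `q s` and hence `ei (pol p, a1) = D`. -/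
theorem mutual_information_of_rare_spikes
    {S : Type*} [Fintype S] [Nonempty S]
    (P_S : S → ℝ) (hPSpos : ∀ s, 0 < P_S s) (hPSsum : ∑ s, P_S s = 1)
    (q : S → ℝ) (hqnn : ∀ s, 0 ≤ q s) (hqsum : ∑ s, q s = 1)
    (pol : ℝ → Bool → S → ℝ)
    (hpol1 : ∀ p s, pol p true s = p * q s / P_S s)
    (hpol0 : ∀ p s, pol p false s = 1 - p * q s / P_S s)
    (marg : ℝ → Bool → ℝ) (hmarg : ∀ p a, marg p a = ∑ s, pol p a s * P_S s)
    (I : ℝ → ℝ)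
    (hI : ∀ p, I p = ∑ s, ∑ a ∈ Finset.univ.filter (fun a : Bool => 0 < pol p a s),
        P_S s * pol p a s * Real.log (pol p a s / marg p a))
    (D : ℝ)
    (hD : D = ∑ s ∈ Finset.univ.filter (fun s => 0 < q s),
        q s * Real.log (q s / P_S s)) :
    Tendsto (fun p => (I p - p * D) / p ^ 2) (nhdsWithin 0 (Set.Ioi 0))
        (nhds ((1 / 2) * ∑ s, (P_S s - q s) ^ 2 / P_S s))
      ∧ (fun p => I p - p * D) =O[nhdsWithin (0 : ℝ) (Set.Ioi 0)] fun p => p ^ 2 := by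
  have hsmall : ∀ᶠ p in 𝓝[>] 0, ∀ s, p * q s / P_S s < 1 := by
    refine eventually_all.2 fun s => Tendsto.eventually_lt_const one_pos ?_
    exact ((Continuous.tendsto' (by fun_prop) 0 0 (by simp)).mono_left nhdsWithin_le_nhds)
  have hT : Tendsto (fun p => (I p - p * D) / p ^ 2) (𝓝[>] 0)
      (𝓝 ((1 / 2) * ∑ s, (P_S s - q s) ^ 2 / P_S s)) := by
    refine ((tendsto_sum_mul_klFun_sub_klFun_div_sq hPSpos hPSsum hqsum).mono_left
      (nhdsWithin_mono _ fun p hp => ne_of_gt hp)).congr' ?_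
    filter_upwards [self_mem_nhdsWithin, hsmall] with p hp hps
    rw [hI, hD,
      mutualInformation_sub_mul_klDiv_eq hPSpos hPSsum hqnn hqsum hpol1 hpol0 hmarg hp hps]
  refine ⟨hT, isBigO_of_div_tendsto_nhds ?_ _ hT⟩
  filter_upwards [self_mem_nhdsWithin] with p hp hp2
  exact absurd hp2 (pow_ne_zero 2 (ne_of_gt hp))
end

section
/- Occam's razor generalization bound: under the T-fold product measure D^⊗T on X^T (i.i.d. sampling), the probability of the event that for every hypothesis h ∈ H, |L(h) − L̂(h, x)| ≤ b·√((−log P_H(h) + log(2/δ))/(2T)) is at least 1 − δ. -/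
/-!
By Hoeffding's inequality, for a fixed hypothesis `h` the empirical loss of an i.i.d. sample of
size `T` deviates from `L(h)` by more than `ε` with probability at most `2 exp (-2 T ε² / b²)`.
The radius `ε_h = b √((log (1 / P_H h) + log (2 / δ)) / (2T))` makes this bound exactly
`δ · P_H h`, so a union bound over `H` leaves a failure probability of at most `δ`.
The sums over samples in the statement are the `T`-fold product of the measure on `X` with
masses `D`.
-/

open MeasureTheory ProbabilityTheory Real

lemma abs_sum_sub_eq_card_mul_abs_sub_mean {ι : Type*} [Fintype ι] [Nonempty ι] (f : ι → ℝ)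
    (m : ℝ) : |∑ i, (f i - m)| = Fintype.card ι * |m - 1 / Fintype.card ι * ∑ i, f i| := by
  have hcard : (0 : ℝ) < Fintype.card ι := by exact_mod_cast Fintype.card_pos
  rw [← abs_of_pos hcard, ← abs_mul, abs_of_pos hcard, ← abs_neg, Finset.sum_sub_distrib,
    Finset.sum_const, Finset.card_univ, nsmul_eq_mul]
  congr 1
  field_simp
  ring

section IIDSample

variable {Ω ι : Type*} [MeasurableSpace Ω] [Fintype ι] {μ : Measure Ω}
  [IsProbabilityMeasure μ] {f : Ω → ℝ} {a b : ℝ}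

lemma hasSubgaussianMGF_eval_sub_integral (hf : Measurable f) (hab : ∀ ω, f ω ∈ Set.Icc a b)
    (i : ι) :
    HasSubgaussianMGF (fun ω : ι → Ω ↦ f (ω i) - μ[f]) ((‖b - a‖₊ / 2) ^ 2)
      (Measure.pi fun _ ↦ μ) := by
  have h := hasSubgaussianMGF_of_mem_Icc hf.aemeasurable (ae_of_all μ hab)
  refine HasSubgaussianMGF.of_map (X := fun x ↦ f x - μ[f]) (Y := fun ω : ι → Ω ↦ ω i)
    (measurable_pi_apply i).aemeasurable ?_
  rwa [(measurePreserving_eval (fun _ : ι ↦ μ) i).map_eq]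

lemma measureReal_pi_sum_sub_integral_ge_le (hf : Measurable f) (hab : ∀ ω, f ω ∈ Set.Icc a b)
    {ε : ℝ} (hε : 0 ≤ ε) :
    (Measure.pi fun _ : ι ↦ μ).real {ω | ε ≤ ∑ i, (f (ω i) - μ[f])} ≤
      exp (-2 * ε ^ 2 / (Fintype.card ι * (b - a) ^ 2)) := by
  have hind : iIndepFun (fun i (ω : ι → Ω) ↦ f (ω i) - μ[f]) (Measure.pi fun _ ↦ μ) :=
    iIndepFun_pi (X := fun _ x ↦ f x - μ[f]) fun _ ↦ (hf.sub_const _).aemeasurable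
  refine (HasSubgaussianMGF.measure_sum_ge_le_of_iIndepFun hind (s := Finset.univ)
    (fun i _ ↦ hasSubgaussianMGF_eval_sub_integral hf hab i) hε).trans_eq ?_
  simp only [Finset.sum_const, Finset.card_univ, nsmul_eq_mul, NNReal.coe_mul, NNReal.coe_natCast,
    NNReal.coe_pow, NNReal.coe_div, coe_nnnorm, Real.norm_eq_abs, NNReal.coe_ofNat, div_pow, sq_abs]
  congr 1
  generalize (b - a) ^ 2 = s
  ring

lemma measureReal_pi_abs_sum_sub_integral_ge_le (hf : Measurable f)
    (hab : ∀ ω, f ω ∈ Set.Icc a b) {ε : ℝ} (hε : 0 ≤ ε) :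
    (Measure.pi fun _ : ι ↦ μ).real {ω | ε ≤ |∑ i, (f (ω i) - μ[f])|} ≤
      2 * exp (-2 * ε ^ 2 / (Fintype.card ι * (b - a) ^ 2)) := by
  have hneg : ∀ ω, -f ω ∈ Set.Icc (-b) (-a) := fun ω ↦
    ⟨neg_le_neg (hab ω).2, neg_le_neg (hab ω).1⟩
  have hsub : {ω : ι → Ω | ε ≤ |∑ i, (f (ω i) - μ[f])|} ⊆
      {ω | ε ≤ ∑ i, (f (ω i) - μ[f])} ∪ {ω | ε ≤ ∑ i, ((-f) (ω i) - μ[-f])} := by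
    intro ω hω
    simp only [Set.mem_ofPred_eq, Set.mem_union, Pi.neg_apply, integral_neg] at hω ⊢
    rcases le_abs'.1 hω with h | h
    · right
      have : ∑ i, (-f (ω i) - -μ[f]) = -∑ i, (f (ω i) - μ[f]) := by
        rw [← Finset.sum_neg_distrib]; simp only [neg_sub_neg, neg_sub]
      linarith
    · left; exact h
  calc _ ≤ _ := measureReal_mono hsub
    _ ≤ _ := measureReal_union_le _ _
    _ ≤ _ := by
      have h1 := measureReal_pi_sum_sub_integral_ge_le (ι := ι) (μ := μ) hf hab hε
      have h2 := measureReal_pi_sum_sub_integral_ge_le (ι := ι) (μ := μ) hf.neg hneg hε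
      rw [show -a - -b = b - a by ring] at h2
      linarith

lemma one_sub_sum_le_measureReal_pi_forall_abs_integral_sub_mean_le [Nonempty ι] {H : Type*}
    [Fintype H] {L : Ω → H → ℝ} (hL : ∀ h, Measurable (L · h))
    (hLab : ∀ x h, L x h ∈ Set.Icc a b) {ε : H → ℝ} (hε : ∀ h, 0 ≤ ε h) :
    1 - ∑ h, 2 * exp (-2 * Fintype.card ι * ε h ^ 2 / (b - a) ^ 2) ≤
      (Measure.pi fun _ : ι ↦ μ).real
        {ω | ∀ h, |∫ x, L x h ∂μ - 1 / Fintype.card ι * ∑ i, L (ω i) h| ≤ ε h} := by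
  set good :=
    {ω : ι → Ω | ∀ h, |∫ x, L x h ∂μ - 1 / Fintype.card ι * ∑ i, L (ω i) h| ≤ ε h}
  have hcard : (0 : ℝ) < Fintype.card ι := by exact_mod_cast Fintype.card_pos
  have hbad :
      goodᶜ ⊆ ⋃ h, {ω | Fintype.card ι * ε h ≤ |∑ i, (L (ω i) h - ∫ x, L x h ∂μ)|} := by
    intro ω hω
    simp only [good, Set.mem_compl_iff, Set.mem_ofPred_eq, not_forall, not_le] at hω
    obtain ⟨h, hlt⟩ := hω
    exact Set.mem_iUnion.2 ⟨h, by
      rw [Set.mem_ofPred_eq, abs_sum_sub_eq_card_mul_abs_sub_mean]; gcongr⟩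
  have hrate : ∀ h, (Measure.pi fun _ : ι ↦ μ).real
      {ω | Fintype.card ι * ε h ≤ |∑ i, (L (ω i) h - ∫ x, L x h ∂μ)|} ≤
        2 * exp (-2 * Fintype.card ι * ε h ^ 2 / (b - a) ^ 2) := fun h ↦ by
    refine (measureReal_pi_abs_sum_sub_integral_ge_le (hL h) (fun x ↦ hLab x h)
      (by have := hε h; positivity)).trans_eq ?_
    congr 2
    field_simp
  have hcover := measureReal_union_le (μ := Measure.pi fun _ : ι ↦ μ) good goodᶜ
  rw [Set.union_compl_self, probReal_univ] at hcover
  linarith [(measureReal_mono (μ := Measure.pi fun _ : ι ↦ μ) hbad).trans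
      (measureReal_iUnion_fintype_le _),
    Finset.sum_le_sum fun h (_ : h ∈ Finset.univ) ↦ hrate h]

end IIDSample

lemma measureReal_pi_finset_eq_sum_prod {ι : Type*} [Fintype ι] {Ω : ι → Type*}
    [∀ i, MeasurableSpace (Ω i)] [∀ i, MeasurableSingletonClass (Ω i)]
    (μ : ∀ i, Measure (Ω i)) [∀ i, IsFiniteMeasure (μ i)] (s : Finset (∀ i, Ω i)) :
    (Measure.pi μ).real s = ∑ ω ∈ s, ∏ i, (μ i).real {ω i} := by
  rw [← sum_measureReal_singleton]
  refine Finset.sum_congr rfl fun ω _ ↦ ?_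
  simp [measureReal_def, ENNReal.toReal_prod]

lemma exists_isProbabilityMeasure_measureReal_singleton_eq {X : Type*} [Fintype X]
    [MeasurableSpace X] [MeasurableSingletonClass X] {D : X → ℝ} (hD : ∀ x, 0 ≤ D x)
    (hDsum : ∑ x, D x = 1) :
    ∃ μ : Measure X, IsProbabilityMeasure μ ∧ ∀ x, μ.real {x} = D x := by
  let p := PMF.ofFintype (fun x ↦ ENNReal.ofReal (D x)) (by
    rw [← ENNReal.ofReal_sum_of_nonneg fun x _ ↦ hD x, hDsum, ENNReal.ofReal_one])
  refine ⟨p.toMeasure, inferInstance, fun x ↦ ?_⟩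
  rw [measureReal_def, p.toMeasure_apply_singleton x (measurableSet_singleton x),
    PMF.ofFintype_apply, ENNReal.toReal_ofReal (hD x)]

lemma two_mul_exp_neg_two_mul_sq_sqrt_eq {T b p δ : ℝ} (hT : 0 < T) (hb : b ≠ 0) (hp : 0 < p)
    (hp1 : p ≤ 1) (hδ : 0 < δ) (hδ2 : δ ≤ 2) :
    2 * exp (-2 * T * (b * √((-log p + log (2 / δ)) / (2 * T))) ^ 2 / b ^ 2) = p * δ := by
  have hc : 0 ≤ -log p + log (2 / δ) := by
    have := log_nonpos hp.le hp1
    have := log_nonneg (show 1 ≤ 2 / δ by rw [le_div_iff₀ hδ]; linarith)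
    linarith
  rw [mul_pow, sq_sqrt (by positivity)]
  rw [show -2 * T * (b ^ 2 * ((-log p + log (2 / δ)) / (2 * T))) / b ^ 2 =
    log p - log (2 / δ) by field_simp; ring, exp_sub, exp_log hp, exp_log (by positivity)]
  field_simp

theorem occams_razor_generalization_bound_general
    {X H : Type*} [Fintype X] [Fintype H]
    (D : X → ℝ) (hDnn : ∀ x, 0 ≤ D x) (hDsum : ∑ x, D x = 1)
    (P_H : H → ℝ) (hPHpos : ∀ h, 0 < P_H h) (hPHsum : ∑ h, P_H h = 1)
    (b : ℝ) (hb : 0 < b)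
    (L : X → H → ℝ) (hLnn : ∀ x h, 0 ≤ L x h) (hLb : ∀ x h, L x h ≤ b)
    (T : ℕ) (hT : 1 ≤ T)
    (δ : ℝ) (hδ0 : 0 < δ) (hδ1 : δ < 1) :
    1 - δ ≤
      ∑ x ∈ Finset.univ.filter (fun x : Fin T → X => ∀ h : H,
          |(∑ x', D x' * L x' h) - (1 / (T : ℝ)) * ∑ t, L (x t) h| ≤
            b * Real.sqrt ((-Real.log (P_H h) + Real.log (2 / δ)) / (2 * T))),
        ∏ t, D (x t) := by
  let _ : MeasurableSpace X := ⊤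
  obtain ⟨μ, _, hμ⟩ := exists_isProbabilityMeasure_measureReal_singleton_eq hDnn hDsum
  have hmean : ∀ h, ∫ x, L x h ∂μ = ∑ x, D x * L x h := fun h ↦ by
    simp [integral_fintype Integrable.of_finite, hμ]
  have hPH1 : ∀ h, P_H h ≤ 1 := fun h ↦
    hPHsum ▸ Finset.single_le_sum (fun h' _ ↦ (hPHpos h').le) (Finset.mem_univ h)
  have _ : NeZero T := ⟨by omega⟩
  have hdev := one_sub_sum_le_measureReal_pi_forall_abs_integral_sub_mean_le (ι := Fin T)
    (μ := μ) (a := 0) (b := b) (fun _ ↦ measurable_of_finite _)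
    (fun x h ↦ ⟨hLnn x h, hLb x h⟩)
    (ε := fun h ↦ b * √((-log (P_H h) + log (2 / δ)) / (2 * T)))
    (fun h ↦ by positivity)
  simp only [Fintype.card_fin, sub_zero, hmean, two_mul_exp_neg_two_mul_sq_sqrt_eq
    (Nat.cast_pos.2 hT) hb.ne' (hPHpos _) (hPH1 _) hδ0 (by linarith), ← Finset.sum_mul, hPHsum,
    one_mul] at hdev
  have hsum : ∀ s : Finset (Fin T → X),
      ∑ ω ∈ s, ∏ t, D (ω t) = (Measure.pi fun _ ↦ μ).real (s : Set (Fin T → X)) := fun s ↦ by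
    simp only [measureReal_pi_finset_eq_sum_prod, hμ]
  rw [hsum, Finset.coe_filter]
  simpa only [Finset.mem_univ, true_and] using hdev

/-- Occam's razor generalization bound: under the `T`-fold product measure on `X^T`
(i.i.d. sampling from the data-generating distribution `D`), the probability of the
event that for every hypothesis `h ∈ H`,
`|L(h) - L̂(h, x)| ≤ b * √((-log (P_H h) + log (2/δ)) / (2T))`
is at least `1 - δ`.  Here `L h = ∑ x, D x * L x h` is the expected loss and
`L̂ h x = (1/T) * ∑ t, L (x t) h` is the empirical loss of the sample `x : Fin T → X`,
whose probability under i.i.d. sampling is `∏ t, D (x t)`. -/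
theorem occams_razor_generalization_bound
    {X H : Type*} [Fintype X] [Nonempty X] [Fintype H] [Nonempty H]
    (D : X → ℝ) (hDnn : ∀ x, 0 ≤ D x) (hDsum : ∑ x, D x = 1)
    (P_H : H → ℝ) (hPHpos : ∀ h, 0 < P_H h) (hPHsum : ∑ h, P_H h = 1)
    (b : ℝ) (hb : 0 < b)
    (L : X → H → ℝ) (hLnn : ∀ x h, 0 ≤ L x h) (hLb : ∀ x h, L x h ≤ b)
    (T : ℕ) (hT : 1 ≤ T)
    (δ : ℝ) (hδ0 : 0 < δ) (hδ1 : δ < 1) :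
    1 - δ ≤
      ∑ x ∈ Finset.univ.filter (fun x : Fin T → X => ∀ h : H,
          |(∑ x', D x' * L x' h) - (1 / (T : ℝ)) * ∑ t, L (x t) h| ≤
            b * Real.sqrt ((-Real.log (P_H h) + Real.log (2 / δ)) / (2 * T))),
        ∏ t, D (x t) :=
  occams_razor_generalization_bound_general D hDnn hDsum P_H hPHpos hPHsum b hb L hLnn hLb T hT δ
    hδ0 hδ1
end
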